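/- For every finite normal form game G with strict preferences, every initial reference point a₀ ∈ A, every positive integer k, and every admissible player function I, the no-harm equilibrium outcome of Γ(a₀,k,I) is unique: any two no-harm equilibria of Γ(a₀,k,I) have the same outcome. -/

import Mathlib

namespace NoHarm

/-- A finite normal form game with `n` players: finite action sets `A i`,
nonempty, with decidable equality, and utility functions `u i : Profile → ℝ`. -/
structure Game (n : ℕ) where
  A : Fin n → Type
  fintypeA : ∀ i, Fintype (A i)
  decA : ∀ i, DecidableEq (A i)
  neA : ∀ i, Nonempty (A i)
  u : Fin n → (∀ i, A i) → ℝ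

attribute [instance] Game.fintypeA Game.decA Game.neA

/-- Action profiles of `G`. -/
abbrev Profile {n : ℕ} (G : Game n) : Type := ∀ i, G.A i

/-- A recorded move in the extensive form game `Γ`: the acting player together
with their choice (`none` = pass, `some a` = choose action `a`; choosing the
current component of the state is "staying", any other action is "moving"). -/
abbrev Move {n : ℕ} (G : Game n) : Type := Σ i : Fin n, Option (G.A i)

/-- A node of `Γ`, identified with the history of moves leading to it
(the root is `[]`). -/
abbrev Hist {n : ℕ} (G : Game n) : Type := List (Move G)

variable {n : ℕ}

/-- One step of the left fold computing, along a history, the triple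
(current state, current reference point, player who established the current
reference point by staying -- `none` for the initial reference point). -/
def stepFold (G : Game n) (x : Profile G × Profile G × Option (Fin n)) (m : Move G) :
    Profile G × Profile G × Option (Fin n) :=
  match m with
  | ⟨_, none⟩ => x
  | ⟨i, some a⟩ =>
    if a = x.1 i then (x.1, x.1, some i)
    else (Function.update x.1 i a, x.2.1, x.2.2)

/-- The (state, reference point, proposer) data at the node `h` of `Γ(a0,·,·)`. -/
def fold3 (G : Game n) (a0 : Profile G) (h : Hist G) :
    Profile G × Profile G × Option (Fin n) :=
  h.foldl (stepFold G) (a0, a0, none)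

/-- The state `S(x)` at a node. -/
def state (G : Game n) (a0 : Profile G) (h : Hist G) : Profile G := (fold3 G a0 h).1

/-- The reference point at a node (the most recent state at which a player
stayed, initially `a0`). -/
def refpt (G : Game n) (a0 : Profile G) (h : Hist G) : Profile G := (fold3 G a0 h).2.1

/-- The player who established the current reference point by staying
(`none` if it is still the initial reference point `a0`). -/
def proposer (G : Game n) (a0 : Profile G) (h : Hist G) : Option (Fin n) :=
  (fold3 G a0 h).2.2

/-- `m` is a stay action at the node `h`: the mover chooses exactly the
component of the current state belonging to them. -/
def IsStay (G : Game n) (a0 : Profile G) (h : Hist G) (m : Move G) : Prop :=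
  m.2 = some (state G a0 h m.1)

/-- Termination condition (i): one player stayed at a state `b`, making it
the reference point, and a different player subsequently also stays at `b`. -/
def TerminalStay (G : Game n) (a0 : Profile G) (h : Hist G) : Prop :=
  ∃ (h' : Hist G) (m : Move G) (i : Fin n),
    h = h' ++ [m] ∧ IsStay G a0 h' m ∧ refpt G a0 h' = state G a0 h' ∧
    proposer G a0 h' = some i ∧ i ≠ m.1

/-- Termination condition (ii): all `n` players consecutively pass
(the last `n` moves are passes and every player is among their movers). -/
def TerminalPass (G : Game n) (h : Hist G) : Prop :=
  n ≤ h.length ∧ (∀ m ∈ h.drop (h.length - n), m.2 = none) ∧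
    (∀ i : Fin n, ∃ m ∈ h.drop (h.length - n), m.1 = i)

/-- Terminal nodes of `Γ(a0,·,·)`. -/
def Terminal (G : Game n) (a0 : Profile G) (h : Hist G) : Prop :=
  TerminalStay G a0 h ∨ TerminalPass G h

/-- Number of predecessor nodes of `h` having the same state as `h` at which
the move `m` was made. -/
def countAct (G : Game n) (a0 : Profile G) (h : Hist G) (m : Move G) : ℕ :=
  ((Finset.range h.length).filter
    (fun t => h[t]? = some m ∧ state G a0 (h.take t) = state G a0 h)).card

/-- Availability of the choice `c` for player `i` at node `h`: pass is always
available, and an action `a` is available iff `i` has chosen `a` at fewer than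
`k` predecessor nodes carrying the same state as `h`. -/
def availAct (G : Game n) (a0 : Profile G) (k : ℕ) (h : Hist G) {i : Fin n}
    (c : Option (G.A i)) : Prop :=
  ∀ a : G.A i, c = some a → countAct G a0 h ⟨i, some a⟩ < k

/-- `h` is a (valid) node of the game tree of `Γ(a0,k,I)`: at each step the
recorded mover is the active player given by the player function `I`, the
chosen action was available, and no proper predecessor is terminal. -/
structure IsNode (G : Game n) (a0 : Profile G) (k : ℕ) (I : Hist G → Fin n)
    (h : Hist G) : Prop where
  mover : ∀ (t : ℕ) (ht : t < h.length), (h.get ⟨t, ht⟩).1 = I (h.take t)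
  avail : ∀ (t : ℕ) (ht : t < h.length), availAct G a0 k (h.take t) (h.get ⟨t, ht⟩).2
  nonterm : ∀ t < h.length, ¬ Terminal G a0 (h.take t)

/-- The player function is admissible: along every path of play the numbers of
nodes at which any two players have been active differ by at most one. -/
def Admissible (G : Game n) (a0 : Profile G) (k : ℕ) (I : Hist G → Fin n) : Prop :=
  ∀ h, IsNode G a0 k I h → ∀ i j : Fin n,
    (h.map Sigma.fst).count i ≤ (h.map Sigma.fst).count j + 1

/-- A pure strategy of player `i`: a choice (pass or an action) at every node. -/
abbrev Strategy (G : Game n) (i : Fin n) : Type := Hist G → Option (G.A i)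

/-- A pure strategy profile. -/
abbrev StratProfile (G : Game n) : Type := ∀ i, Strategy G i

/-- A strategy profile is valid if at every non-terminal node of the tree the
active player's prescribed choice is available. -/
def ValidProfile (G : Game n) (a0 : Profile G) (k : ℕ) (I : Hist G → Fin n)
    (σ : StratProfile G) : Prop :=
  ∀ h, IsNode G a0 k I h → ¬ Terminal G a0 h → availAct G a0 k h (σ (I h) h)

open Classical in
/-- Play according to `σ` for (at most) the given number of steps from a node,
stopping at terminal nodes. -/
noncomputable def playN (G : Game n) (a0 : Profile G) (I : Hist G → Fin n)
    (σ : StratProfile G) : ℕ → Hist G → Hist G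
  | 0, h => h
  | (t + 1), h =>
    if Terminal G a0 h then h
    else playN G a0 I σ t (h ++ [⟨I h, σ (I h) h⟩])

/-- A (generous) upper bound for the length of any play of `Γ(a0,k,I)`. -/
def bound (G : Game n) (k : ℕ) : ℕ :=
  ((k + 2) * (Fintype.card (Profile G) + 2) * ((∑ i, Fintype.card (G.A i)) + 2) + 2)
    * (n + 2) * 4

/-- The outcome of `σ` in the subgame rooted at `h`: the reference point at the
terminal node reached by playing `σ` from `h`. -/
noncomputable def outcomeFrom (G : Game n) (a0 : Profile G) (k : ℕ)
    (I : Hist G → Fin n) (σ : StratProfile G) (h : Hist G) : Profile G :=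
  refpt G a0 (playN G a0 I σ (bound G k + 1) h)

/-- The outcome of the strategy profile `σ` in `Γ(a0,k,I)`. -/
noncomputable def outcome (G : Game n) (a0 : Profile G) (k : ℕ)
    (I : Hist G → Fin n) (σ : StratProfile G) : Profile G :=
  outcomeFrom G a0 k I σ []

/-- `σ` satisfies the no-harm principle: every stay action it prescribes, at
every (on- or off-path) non-terminal node of the tree, does not harm any other
player relative to the reference point at that node. -/
def SatNHP (G : Game n) (a0 : Profile G) (k : ℕ) (I : Hist G → Fin n)
    (σ : StratProfile G) : Prop :=
  ∀ h, IsNode G a0 k I h → ¬ Terminal G a0 h →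
    σ (I h) h = some (state G a0 h (I h)) →
    ∀ j, j ≠ I h → G.u j (refpt G a0 h) ≤ G.u j (state G a0 h)

/-- No-harm equilibrium of `Γ(a0,k,I)`: a valid strategy profile satisfying the
NHP such that at every non-terminal node the active player's choice is a best
response among deviations keeping the profile valid and NHP-compliant. -/
def NHE (G : Game n) (a0 : Profile G) (k : ℕ) (I : Hist G → Fin n)
    (σ : StratProfile G) : Prop :=
  ValidProfile G a0 k I σ ∧ SatNHP G a0 k I σ ∧
  ∀ h, IsNode G a0 k I h → ¬ Terminal G a0 h →
    ∀ τ : Strategy G (I h),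
      ValidProfile G a0 k I (Function.update σ (I h) τ) →
      SatNHP G a0 k I (Function.update σ (I h) τ) →
      G.u (I h) (outcomeFrom G a0 k I (Function.update σ (I h) τ) h) ≤
        G.u (I h) (outcomeFrom G a0 k I σ h)

/-- Subgame perfect equilibrium of `Γ(a0,k,I)` (no NHP constraint). -/
def SPE (G : Game n) (a0 : Profile G) (k : ℕ) (I : Hist G → Fin n)
    (σ : StratProfile G) : Prop :=
  ValidProfile G a0 k I σ ∧
  ∀ h, IsNode G a0 k I h → ¬ Terminal G a0 h →
    ∀ τ : Strategy G (I h),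
      ValidProfile G a0 k I (Function.update σ (I h) τ) →
      G.u (I h) (outcomeFrom G a0 k I (Function.update σ (I h) τ) h) ≤
        G.u (I h) (outcomeFrom G a0 k I σ h)

/-- `b` Pareto dominates `a`. -/
def ParetoDom (G : Game n) (b a : Profile G) : Prop :=
  (∀ i, G.u i a ≤ G.u i b) ∧ ∃ i, G.u i a < G.u i b

/-- `a` is Pareto optimal. -/
def ParetoOpt (G : Game n) (a : Profile G) : Prop := ∀ b, ¬ ParetoDom G b a

/-- `b` strictly Pareto dominates `a`. -/
def StrictDom (G : Game n) (b a : Profile G) : Prop := ∀ i, G.u i a < G.u i b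

/-- `a` is weakly Pareto optimal. -/
def WeakParetoOpt (G : Game n) (a : Profile G) : Prop := ∀ b, ¬ StrictDom G b a

/-- Preferences are strict: each utility function is injective on profiles. -/
def StrictPrefs (G : Game n) : Prop := ∀ i, Function.Injective (G.u i)


/-! ### Auxiliary lemmas -/

section Aux

variable {G : Game n} {a0 : Profile G} {k : ℕ} {I : Hist G → Fin n}

theorem playN_terminal (σ : StratProfile G) {h : Hist G} (hT : Terminal G a0 h) :
    ∀ m, playN G a0 I σ m h = h := by
  intro m; cases m with
  | zero => rfl
  | succ t => simp [playN, hT]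

theorem playN_succ (σ : StratProfile G) {h : Hist G} (hT : ¬ Terminal G a0 h) (t : ℕ) :
    playN G a0 I σ (t + 1) h = playN G a0 I σ t (h ++ [⟨I h, σ (I h) h⟩]) := by
  simp [playN, hT]

theorem playN_congr (σ σ₂ : StratProfile G) :
    ∀ (m : ℕ) (p : Hist G), (∀ x : Hist G, p <+: x → ∀ j, σ j x = σ₂ j x) →
    playN G a0 I σ m p = playN G a0 I σ₂ m p := by
  intro m
  induction m with
  | zero => intro p _; rfl
  | succ t ih =>
    intro p hp
    by_cases hT : Terminal G a0 p
    · simp [playN, hT]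
    · rw [playN_succ σ hT, playN_succ σ₂ hT, hp p (List.prefix_refl p) (I p)]
      exact ih _ (fun x hx j => hp x (((p.prefix_append _)).trans hx) j)

theorem isNode_nil : IsNode G a0 k I [] := by
  refine ⟨?_, ?_, ?_⟩ <;> intro t ht <;> simp at ht

theorem IsNode.take {h : Hist G} (hh : IsNode G a0 k I h) (t : ℕ) :
    IsNode G a0 k I (h.take t) := by
  have hlen : ∀ s, s < (h.take t).length → s < t ∧ s < h.length := by
    intro s hs; simp [List.length_take] at hs; omega
  have hget : ∀ s (hs : s < (h.take t).length),
      (h.take t).get ⟨s, hs⟩ = h.get ⟨s, (hlen s hs).2⟩ := by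
    intro s hs
    simp [List.get_eq_getElem, List.getElem_take]
  have htake : ∀ s, s < (h.take t).length → (h.take t).take s = h.take s := by
    intro s hs
    rw [List.take_take, min_eq_left (le_of_lt (hlen s hs).1)]
  refine ⟨?_, ?_, ?_⟩
  · intro s hs; rw [hget s hs, htake s hs]; exact hh.mover s (hlen s hs).2
  · intro s hs; rw [hget s hs, htake s hs]; exact hh.avail s (hlen s hs).2
  · intro s hs; rw [htake s hs]; exact hh.nonterm s (hlen s hs).2

theorem isNode_snoc {h : Hist G} (hh : IsNode G a0 k I h) (hT : ¬ Terminal G a0 h)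
    {c : Option (G.A (I h))} (hc : availAct G a0 k h c) :
    IsNode G a0 k I (h ++ [⟨I h, c⟩]) := by
  have hlen : (h ++ [(⟨I h, c⟩ : Move G)]).length = h.length + 1 := by simp
  have htake : ∀ s, s ≤ h.length → (h ++ [(⟨I h, c⟩ : Move G)]).take s = h.take s := by
    intro s hs
    rw [List.take_append_of_le_length hs]
  refine ⟨?_, ?_, ?_⟩
  · intro s hs
    rcases lt_or_eq_of_le (Nat.lt_succ_iff.mp (hlen ▸ hs)) with hlt | heq
    · have : (h ++ [(⟨I h, c⟩ : Move G)]).get ⟨s, hs⟩ = h.get ⟨s, hlt⟩ := by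
        simp [List.get_eq_getElem, List.getElem_append_left hlt]
      rw [this, htake s (le_of_lt hlt)]; exact hh.mover s hlt
    · subst heq
      have : (h ++ [(⟨I h, c⟩ : Move G)]).get ⟨h.length, hs⟩ = ⟨I h, c⟩ := by
        simp [List.get_eq_getElem]
      rw [this, htake h.length le_rfl, List.take_length]
  · intro s hs
    rcases lt_or_eq_of_le (Nat.lt_succ_iff.mp (hlen ▸ hs)) with hlt | heq
    · have : (h ++ [(⟨I h, c⟩ : Move G)]).get ⟨s, hs⟩ = h.get ⟨s, hlt⟩ := by
        simp [List.get_eq_getElem, List.getElem_append_left hlt]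
      rw [this, htake s (le_of_lt hlt)]; exact hh.avail s hlt
    · subst heq
      have : (h ++ [(⟨I h, c⟩ : Move G)]).get ⟨h.length, hs⟩ = ⟨I h, c⟩ := by
        simp [List.get_eq_getElem]
      rw [this, htake h.length le_rfl, List.take_length]
      exact hc
  · intro s hs
    rcases lt_or_eq_of_le (Nat.lt_succ_iff.mp (hlen ▸ hs)) with hlt | heq
    · rw [htake s (le_of_lt hlt)]; exact hh.nonterm s hlt
    · subst heq
      rw [htake h.length le_rfl, List.take_length]; exact hT

end Aux

theorem sum_count_eq_length (l : List (Fin n)) : ∑ i, l.count i = l.length := by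
  induction l with
  | nil => simp
  | cons a t ih =>
    simp only [List.count_cons, List.length_cons, Finset.sum_add_distrib, ih]
    simp

section Counting

variable {G : Game n} {a0 : Profile G} {k : ℕ} {I : Hist G → Fin n}

/-- Claim C: at a prefix whose length is a multiple of `n`, every player has
been active exactly `q` times (from admissibility). -/
theorem counts_take (hI : Admissible G a0 k I) {h : Hist G} (hh : IsNode G a0 k I h)
    {q : ℕ} (hq : q * n ≤ h.length) (i : Fin n) :
    ((h.take (q * n)).map Sigma.fst).count i = q := by
  set l := (h.take (q * n)).map Sigma.fst with hl
  have hlen : l.length = q * n := by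
    simp [hl, List.length_take]; omega
  have hbal : ∀ i j : Fin n, l.count i ≤ l.count j + 1 := hI _ (hh.take _)
  have hsum : ∑ j, l.count j = n * q := by rw [sum_count_eq_length, hlen, Nat.mul_comm]
  by_contra hne
  have hnpos : 0 < n := i.pos
  rcases Nat.lt_or_ge (l.count i) q with hlt | hge
  · have hub : ∀ j : Fin n, l.count j ≤ q := by
      intro j
      by_contra hj
      push_neg at hj
      have := hbal j i
      omega
    have : ∑ j, l.count j < ∑ _j : Fin n, q := by
      refine Finset.sum_lt_sum (fun j _ => hub j) ⟨i, Finset.mem_univ i, hlt⟩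
    simp [Finset.sum_const, Finset.card_univ] at this
    omega
  · have hgt : q < l.count i := lt_of_le_of_ne hge (fun hc => hne hc.symm)
    have hlb : ∀ j : Fin n, q ≤ l.count j := by
      intro j
      have := hbal i j
      omega
    have : ∑ _j : Fin n, q < ∑ j, l.count j := by
      refine Finset.sum_lt_sum (fun j _ => hlb j) ⟨i, Finset.mem_univ i, hgt⟩
    simp [Finset.sum_const, Finset.card_univ] at this
    omega

/-- Every aligned block of `n` consecutive moves contains every player. -/
theorem block_covers (hI : Admissible G a0 k I) {h : Hist G} (hh : IsNode G a0 k I h)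
    {q : ℕ} (hq : q * n + n ≤ h.length) (i : Fin n) :
    ∃ t, q * n ≤ t ∧ t < q * n + n ∧ ∃ ht : t < h.length, (h.get ⟨t, ht⟩).1 = i := by
  have h1 : ((h.take (q * n)).map Sigma.fst).count i = q :=
    counts_take hI hh (by omega) i
  have h2 : ((h.take ((q + 1) * n)).map Sigma.fst).count i = q + 1 :=
    counts_take hI hh (by rw [Nat.succ_mul]; omega) i
  have hsplit : h.take ((q + 1) * n) = h.take (q * n) ++ (h.drop (q * n)).take n := by
    rw [Nat.succ_mul, List.take_add]
  rw [hsplit, List.map_append, List.count_append, h1] at h2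
  have hmid : (((h.drop (q * n)).take n).map Sigma.fst).count i = 1 := by omega
  have hmem : i ∈ ((h.drop (q * n)).take n).map Sigma.fst := by
    rw [← List.count_pos_iff]
    omega
  rcases List.mem_map.mp hmem with ⟨m, hm, hfst⟩
  rcases List.mem_iff_getElem.mp hm with ⟨s, hs, hget⟩
  have hslen : s < n := by
    have := hs
    simp [List.length_take] at this
    omega
  have hsd : s < (h.drop (q * n)).length := by
    simp [List.length_drop]; omega
  have hindex : q * n + s < h.length := by omega
  refine ⟨q * n + s, by omega, by omega, hindex, ?_⟩
  have : ((h.drop (q * n)).take n)[s] = h[q * n + s] := by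
    rw [List.getElem_take]
    exact List.getElem_drop
  rw [List.get_eq_getElem, ← this, hget, hfst]

/-- Claim W: in a node all of whose prefixes (including itself) are
non-terminal, every window of `2 * n` consecutive moves contains a non-pass. -/
theorem window_has_action (hI : Admissible G a0 k I) {h : Hist G}
    (hh : IsNode G a0 k I h) (hNT : ¬ Terminal G a0 h) {t : ℕ}
    (hw : t + 2 * n ≤ h.length) (hn1 : 1 ≤ n) :
    ∃ u, t ≤ u ∧ u < t + 2 * n ∧ ∃ hu : u < h.length, (h.get ⟨u, hu⟩).2 ≠ none := by
  by_contra hpass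
  push_neg at hpass
  set q := t / n + 1 with hqdef
  have hdm := Nat.div_add_mod t n
  have hmod := Nat.mod_lt t (show 0 < n by omega)
  have hsm : q * n = t / n * n + n := Nat.succ_mul _ _
  have hcm : n * (t / n) = t / n * n := Nat.mul_comm _ _
  have hq1 : t < q * n := by omega
  have hq2 : q * n ≤ t + n := by omega
  have hend : q * n + n ≤ h.length := by omega
  set h2 := h.take (q * n + n) with hh2
  have hlen2 : h2.length = q * n + n := by simp [hh2, List.length_take]; omega
  have hdrop : h2.drop (h2.length - n) = (h.drop (q * n)).take n := by
    rw [hlen2, show q * n + n - n = q * n by omega, hh2, List.drop_take,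
      show q * n + n - q * n = n by omega]
  have hTP : TerminalPass G h2 := by
    refine ⟨by omega, ?_, ?_⟩
    · intro m hm
      rw [hdrop] at hm
      rcases List.mem_iff_getElem.mp hm with ⟨s, hs, hget⟩
      have hsn : s < n := by
        simp [List.length_take, List.length_drop] at hs; omega
      have hidx : q * n + s < h.length := by omega
      have hval : ((h.drop (q * n)).take n)[s] = h[q * n + s] := by
        rw [List.getElem_take, List.getElem_drop]
      have := hpass (q * n + s) (by omega) (by omega) hidx
      rw [← hget, hval]
      simpa [List.get_eq_getElem] using this
    · intro i
      rcases block_covers hI hh hend i with ⟨u, hu1, hu2, hul, hufst⟩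
      obtain ⟨s, rfl⟩ : ∃ s, u = q * n + s := ⟨u - q * n, by omega⟩
      have hsn : s < n := by omega
      refine ⟨h.get ⟨q * n + s, hul⟩, ?_, hufst⟩
      rw [hdrop]
      apply List.mem_iff_getElem.mpr
      refine ⟨s, ?_, ?_⟩
      · simp [List.length_take, List.length_drop]; omega
      · rw [List.getElem_take, List.getElem_drop, List.get_eq_getElem]
  have hterm : Terminal G a0 h2 := Or.inr hTP
  rcases lt_or_eq_of_le hend with hlt | heq
  · exact hh.nonterm _ hlt hterm
  · rw [hh2, heq, List.take_length] at hterm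
    exact hNT hterm

end Counting

open Classical in
/-- The number of non-pass moves in a history. -/
noncomputable def actCard (G : Game n) (h : Hist G) : ℕ :=
  ((Finset.range h.length).filter
    (fun t => ∃ ht : t < h.length, (h.get ⟨t, ht⟩).2 ≠ none)).card

section Counting2

variable {G : Game n} {a0 : Profile G} {k : ℕ} {I : Hist G → Fin n}

/-- Gap counting: the length of a node, all of whose prefixes are
non-terminal, is controlled by its number of non-pass moves. -/
theorem length_le_actCard (hI : Admissible G a0 k I) (hn1 : 1 ≤ n) :
    ∀ N (h : Hist G), h.length ≤ N → IsNode G a0 k I h → ¬ Terminal G a0 h →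
      h.length ≤ 2 * n * (actCard G h + 1) := by
  intro N
  induction N with
  | zero => intro h hN _ _; omega
  | succ N ih =>
    intro h hN hh hNT
    by_cases hsmall : h.length < 2 * n
    · have h1 : 1 ≤ actCard G h + 1 := by omega
      have := Nat.mul_le_mul_left (2 * n) h1
      omega
    · push_neg at hsmall
      set t := h.length - 2 * n with ht
      have hw : t + 2 * n ≤ h.length := by omega
      obtain ⟨u, hu1, hu2, hul, hua⟩ := window_has_action hI hh hNT hw hn1
      set g := h.take t with hg
      have hglen : g.length = t := by simp [hg, List.length_take]; omega
      have hgN : g.length ≤ N := by omega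
      have hgnode := hh.take t
      have hgNT : ¬ Terminal G a0 g := hh.nonterm t (by omega)
      have hcard : actCard G g < actCard G h := by
        apply Finset.card_lt_card
        rw [Finset.ssubset_def]
        constructor
        · intro s hs
          simp only [Finset.mem_filter, Finset.mem_range] at hs ⊢
          obtain ⟨hs1, hs2, hs3⟩ := hs
          have hst : s < t := by omega
          have hsh : s < h.length := by omega
          refine ⟨hsh, hsh, ?_⟩
          have : g.get ⟨s, hs2⟩ = h.get ⟨s, hsh⟩ := by
            simp [hg, List.get_eq_getElem, List.getElem_take]
          rwa [this] at hs3
        · intro hsub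
          have hu : u ∈ (Finset.range h.length).filter
              (fun s => ∃ hs : s < h.length, (h.get ⟨s, hs⟩).2 ≠ none) := by
            simp only [Finset.mem_filter, Finset.mem_range]
            exact ⟨hul, hul, hua⟩
          have := hsub hu
          simp only [Finset.mem_filter, Finset.mem_range] at this
          omega
      have hgle := ih g hgN hgnode hgNT
      have hstep : actCard G g + 2 ≤ actCard G h + 1 := by omega
      have := Nat.mul_le_mul_left (2 * n) hstep
      have hdistr : 2 * n * (actCard G g + 2) = 2 * n * (actCard G g + 1) + 2 * n := by
        ring
      omega

/-- Each (move, state) pair occurs at most `k` times, so the number of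
non-pass moves in a node is bounded. -/
theorem actCard_le {h : Hist G} (hh : IsNode G a0 k I h) :
    actCard G h ≤ k * (((∑ i, Fintype.card (G.A i)) + n + 1) *
      Fintype.card (Profile G)) := by
  classical
  unfold actCard
  set S := (Finset.range h.length).filter
    (fun t => ∃ ht : t < h.length, (h.get ⟨t, ht⟩).2 ≠ none) with hS
  set f : ℕ → Option (Move G) × Profile G :=
    fun t => (h[t]?, state G a0 (h.take t)) with hf
  have hfiber : ∀ b ∈ S.image f, (S.filter fun t => f t = b).card ≤ k := by
    intro b hb
    obtain ⟨t0, ht0S, hft0⟩ := Finset.mem_image.mp hb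
    set F := S.filter (fun t => f t = b) with hF
    have hFne : F.Nonempty := ⟨t0, Finset.mem_filter.mpr ⟨ht0S, hft0⟩⟩
    set t1 := F.max' hFne with ht1
    have ht1F : t1 ∈ F := F.max'_mem hFne
    have ht1S : t1 ∈ S := (Finset.mem_filter.mp ht1F).1
    have hft1 : f t1 = b := (Finset.mem_filter.mp ht1F).2
    have ht1lt : t1 < h.length := Finset.mem_range.mp (Finset.mem_filter.mp ht1S).1
    obtain ⟨ht1lt', hne⟩ := (Finset.mem_filter.mp ht1S).2
    set m0 := h.get ⟨t1, ht1lt⟩ with hm0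
    obtain ⟨a, ha⟩ : ∃ a, m0.2 = some a := by
      cases hm : m0.2 with
      | none => exact absurd hm hne
      | some a => exact ⟨a, rfl⟩
    have havail := hh.avail t1 ht1lt
    have hcount : countAct G a0 (h.take t1) ⟨m0.1, some a⟩ < k := havail a (by exact ha)
    have hm0eq : (⟨m0.1, some a⟩ : Move G) = m0 := by rw [← ha]
    rw [hm0eq] at hcount
    have hlen1 : (h.take t1).length = t1 := by simp [List.length_take]; omega
    have hc1 : (F.erase t1).card ≤ countAct G a0 (h.take t1) m0 := by
      unfold countAct
      apply Finset.card_le_card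
      intro s hs
      have hsne : s ≠ t1 := (Finset.mem_erase.mp hs).1
      have hsF : s ∈ F := (Finset.mem_erase.mp hs).2
      have hslt : s < t1 := lt_of_le_of_ne (F.le_max' s hsF) hsne
      have hsS : s ∈ S := (Finset.mem_filter.mp hsF).1
      have hfs : f s = b := (Finset.mem_filter.mp hsF).2
      have hsh : s < h.length := Finset.mem_range.mp (Finset.mem_filter.mp hsS).1
      have hfeq : f s = f t1 := by rw [hfs, hft1]
      have h1 : h[s]? = h[t1]? := congrArg Prod.fst hfeq
      have h2 : state G a0 (h.take s) = state G a0 (h.take t1) := congrArg Prod.snd hfeq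
      refine Finset.mem_filter.mpr ⟨Finset.mem_range.mpr (by omega), ?_, ?_⟩
      · rw [List.getElem?_take_of_lt hslt, h1, List.getElem?_eq_getElem ht1lt]
        rfl
      · rw [List.take_take, min_eq_left (le_of_lt hslt)]
        exact h2
    have hcF : F.card ≤ (F.erase t1).card + 1 := by
      rw [Finset.card_erase_of_mem ht1F]
      have : 1 ≤ F.card := Finset.card_pos.mpr hFne
      omega
    omega
  have h1 : S.card ≤ k * (S.image f).card :=
    Finset.card_le_mul_card_image S k hfiber
  have h2 : (S.image f).card ≤ Fintype.card (Option (Move G) × Profile G) :=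
    Finset.card_le_univ _
  have h3 : Fintype.card (Option (Move G) × Profile G) =
      ((∑ i, Fintype.card (G.A i)) + n + 1) * Fintype.card (Profile G) := by
    rw [Fintype.card_prod, Fintype.card_option]
    congr 1
    rw [Fintype.card_sigma]
    simp [Fintype.card_option, Finset.sum_add_distrib, Finset.card_univ]
  calc S.card ≤ k * (S.image f).card := h1
    _ ≤ k * (((∑ i, Fintype.card (G.A i)) + n + 1) * Fintype.card (Profile G)) := by
        rw [← h3]; exact Nat.mul_le_mul_left k h2

/-- **Lemma A**: every node of the game tree has length at most `bound`. -/
theorem length_le_bound (hn : 2 ≤ n) (hk : 0 < k) (hI : Admissible G a0 k I)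
    {h : Hist G} (hh : IsNode G a0 k I h) : h.length ≤ bound G k := by
  rcases Nat.eq_zero_or_pos h.length with h0 | hpos
  · rw [h0]; exact Nat.zero_le _
  set g := h.take (h.length - 1) with hg
  have hgnode : IsNode G a0 k I g := hh.take _
  have hgNT : ¬ Terminal G a0 g := hh.nonterm _ (by omega)
  have hglen : g.length = h.length - 1 := by simp [hg, List.length_take]
  have hgap := length_le_actCard hI (by omega) g.length g le_rfl hgnode hgNT
  have hact := actCard_le (a0 := a0) (k := k) (I := I) hgnode
  set SA := ∑ i, Fintype.card (G.A i) with hSA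
  set P := Fintype.card (Profile G) with hP
  have hP1 : 1 ≤ P := Fintype.card_pos
  have hSAn : n ≤ SA := by
    rw [hSA]
    calc n = ∑ _i : Fin n, 1 := by simp
      _ ≤ ∑ i, Fintype.card (G.A i) :=
        Finset.sum_le_sum (fun i _ => Fintype.card_pos)
  have hB : 2 * n * (k * ((SA + n + 1) * P) + 1) + 1 ≤ bound G k := by
    rw [bound, ← hSA, ← hP]
    have e1 : SA + n + 1 ≤ 2 * SA + 1 := by omega
    have e3 : k * ((SA + n + 1) * P) ≤ k * ((2 * SA + 1) * P) :=
      Nat.mul_le_mul_left _ (Nat.mul_le_mul_right _ e1)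
    have e4 : k * (P * (SA + 2)) ≤ (k + 2) * (P + 2) * (SA + 2) := by
      have h' := Nat.mul_le_mul
        (Nat.mul_le_mul (Nat.le_add_right k 2) (Nat.le_add_right P 2))
        (le_refl (SA + 2))
      calc k * (P * (SA + 2)) = k * P * (SA + 2) := by ring
        _ ≤ (k + 2) * (P + 2) * (SA + 2) := h'
    have e5 : (k * (P * (SA + 2)) + 2) * (n + 2) * 4 ≤
        ((k + 2) * (P + 2) * (SA + 2) + 2) * (n + 2) * 4 := by
      apply Nat.mul_le_mul_right
      apply Nat.mul_le_mul_right
      omega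
    have e6 : 2 * n * (k * ((2 * SA + 1) * P) + 1) + 1 ≤
        (k * (P * (SA + 2)) + 2) * (n + 2) * 4 := by
      have expand : (k * (P * (SA + 2)) + 2) * (n + 2) * 4 =
          2 * n * (k * ((2 * SA + 1) * P) + 1) + 1 +
            (8 * (k * P * SA) + 6 * (n * (k * P)) + 16 * (k * P) + 6 * n + 15) := by
        ring
      rw [expand]
      exact Nat.le_add_right _ _
    calc 2 * n * (k * ((SA + n + 1) * P) + 1) + 1
        ≤ 2 * n * (k * ((2 * SA + 1) * P) + 1) + 1 :=
          Nat.add_le_add_right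
            (Nat.mul_le_mul_left _ (Nat.add_le_add_right e3 1)) 1
      _ ≤ (k * (P * (SA + 2)) + 2) * (n + 2) * 4 := e6
      _ ≤ ((k + 2) * (P + 2) * (SA + 2) + 2) * (n + 2) * 4 := e5
  have hmono : 2 * n * (actCard G g + 1) ≤ 2 * n * (k * ((SA + n + 1) * P) + 1) :=
    Nat.mul_le_mul_left _ (by omega)
  omega

end Counting2

section Play

variable {G : Game n} {a0 : Profile G} {k : ℕ} {I : Hist G → Fin n}

/-- Stabilization: play has certainly terminated after enough steps. -/
theorem playN_stable (hn : 2 ≤ n) (hk : 0 < k) (hI : Admissible G a0 k I)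
    {σ : StratProfile G} (hσ : ValidProfile G a0 k I σ) :
    ∀ (d : ℕ) (h : Hist G), IsNode G a0 k I h → bound G k + 1 ≤ h.length + d →
      ∀ m, d ≤ m → playN G a0 I σ m h = playN G a0 I σ d h := by
  intro d
  induction d with
  | zero =>
    intro h hh hlen m _
    exact absurd hlen (by have := length_le_bound hn hk hI hh; omega)
  | succ d ih =>
    intro h hh hlen m hm
    by_cases hT : Terminal G a0 h
    · rw [playN_terminal σ hT, playN_terminal σ hT]
    · obtain ⟨m', rfl⟩ : ∃ m', m = m' + 1 := ⟨m - 1, by omega⟩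
      rw [playN_succ σ hT, playN_succ σ hT]
      have hnode' : IsNode G a0 k I (h ++ [⟨I h, σ (I h) h⟩]) :=
        isNode_snoc hh hT (hσ h hh hT)
      exact ih _ hnode'
        (by simp only [List.length_append, List.length_singleton]; omega) m' (by omega)

theorem outcomeFrom_terminal {σ : StratProfile G} {h : Hist G} (hT : Terminal G a0 h) :
    outcomeFrom G a0 k I σ h = refpt G a0 h := by
  rw [outcomeFrom, playN_terminal σ hT]

theorem outcomeFrom_step (hn : 2 ≤ n) (hk : 0 < k) (hI : Admissible G a0 k I)
    {σ : StratProfile G} (hσ : ValidProfile G a0 k I σ) {h : Hist G}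
    (hh : IsNode G a0 k I h) (hT : ¬ Terminal G a0 h) :
    outcomeFrom G a0 k I σ h = outcomeFrom G a0 k I σ (h ++ [⟨I h, σ (I h) h⟩]) := by
  rw [outcomeFrom, outcomeFrom, playN_succ σ hT]
  set h1 := h ++ [⟨I h, σ (I h) h⟩] with hh1
  have hnode1 : IsNode G a0 k I h1 := isNode_snoc hh hT (hσ h hh hT)
  have hlen1 : 1 ≤ h1.length := by simp [hh1]
  have hd : bound G k + 1 ≤ h1.length + bound G k := by omega
  exact congrArg (refpt G a0) (playN_stable hn hk hI hσ (bound G k) h1 hnode1 hd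
    (bound G k + 1) (by omega)).symm

theorem outcomeFrom_congr {σ σ₂ : StratProfile G} {p : Hist G}
    (hagree : ∀ x : Hist G, p <+: x → ∀ j, σ j x = σ₂ j x) :
    outcomeFrom G a0 k I σ p = outcomeFrom G a0 k I σ₂ p := by
  rw [outcomeFrom, outcomeFrom, playN_congr σ σ₂ _ p hagree]

end Play

/-- **Uniqueness.** For every finite normal form game with strict
preferences, every initial reference point, every `k ≥ 1` and every admissible
player function, any two no-harm equilibria of `Γ(a0,k,I)` have the same
outcome. -/
theorem nhe_outcome_unique {n : ℕ} (hn : 2 ≤ n) (G : Game n) (hG : StrictPrefs G)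
    (a0 : Profile G) (k : ℕ) (hk : 0 < k) (I : Hist G → Fin n)
    (hI : Admissible G a0 k I) (σ σ' : StratProfile G)
    (hσ : NHE G a0 k I σ) (hσ' : NHE G a0 k I σ') :
    outcome G a0 k I σ = outcome G a0 k I σ' := by
  obtain ⟨hval, hnhp, hbr⟩ := hσ
  obtain ⟨hval', hnhp', hbr'⟩ := hσ'
  suffices H : ∀ (d : ℕ) (h : Hist G), IsNode G a0 k I h →
      bound G k + 1 ≤ h.length + d →
      outcomeFrom G a0 k I σ h = outcomeFrom G a0 k I σ' h by
    exact H (bound G k + 1) [] isNode_nil (by simp)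
  intro d
  induction d with
  | zero =>
    intro h hh hlen
    exact absurd hlen (by have := length_le_bound hn hk hI hh; omega)
  | succ d ih =>
    intro h hh hT'
    by_cases hT : Terminal G a0 h
    · rw [outcomeFrom_terminal hT, outcomeFrom_terminal hT]
    · -- the two prescribed children
      set h1 := h ++ [⟨I h, σ (I h) h⟩] with hh1
      set h2 := h ++ [⟨I h, σ' (I h) h⟩] with hh2
      have hnode1 : IsNode G a0 k I h1 := isNode_snoc hh hT (hval h hh hT)
      have hnode2 : IsNode G a0 k I h2 := isNode_snoc hh hT (hval' h hh hT)
      have hlen1 : h1.length = h.length + 1 := by simp [hh1]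
      have hlen2 : h2.length = h.length + 1 := by simp [hh2]
      have ih1 : outcomeFrom G a0 k I σ h1 = outcomeFrom G a0 k I σ' h1 :=
        ih h1 hnode1 (by omega)
      have ih2 : outcomeFrom G a0 k I σ h2 = outcomeFrom G a0 k I σ' h2 :=
        ih h2 hnode2 (by omega)
      have hstep1 : outcomeFrom G a0 k I σ h = outcomeFrom G a0 k I σ h1 :=
        outcomeFrom_step hn hk hI hval hh hT
      have hstep2 : outcomeFrom G a0 k I σ' h = outcomeFrom G a0 k I σ' h2 :=
        outcomeFrom_step hn hk hI hval' hh hT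
      -- generic deviation construction
      have hdev : ∀ (ρ ρ₂ : StratProfile G), ValidProfile G a0 k I ρ →
          ValidProfile G a0 k I ρ₂ → SatNHP G a0 k I ρ → SatNHP G a0 k I ρ₂ →
          (∀ hb, IsNode G a0 k I hb → ¬ Terminal G a0 hb →
            ∀ τ : Strategy G (I hb),
              ValidProfile G a0 k I (Function.update ρ (I hb) τ) →
              SatNHP G a0 k I (Function.update ρ (I hb) τ) →
              G.u (I hb) (outcomeFrom G a0 k I (Function.update ρ (I hb) τ) hb) ≤
                G.u (I hb) (outcomeFrom G a0 k I ρ hb)) →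
          G.u (I h) (outcomeFrom G a0 k I ρ (h ++ [⟨I h, ρ₂ (I h) h⟩])) ≤
            G.u (I h) (outcomeFrom G a0 k I ρ h) := by
        intro ρ ρ₂ hvρ hvρ₂ hnρ hnρ₂ hbrρ
        set c' : Option (G.A (I h)) := ρ₂ (I h) h with hc'
        set τ : Strategy G (I h) := fun x => if x = h then c' else ρ (I h) x with hτ
        set ρτ := Function.update ρ (I h) τ with hρτ
        have hsel : ∀ x : Hist G, ρτ (I h) x = if x = h then c' else ρ (I h) x := by
          intro x
          rw [hρτ, Function.update_self]
        have hoff : ∀ (j : Fin n) (x : Hist G), j ≠ I h → ρτ j x = ρ j x := by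
          intro j x hj
          rw [hρτ, Function.update_of_ne hj]
        have hval_τ : ValidProfile G a0 k I ρτ := by
          intro x hx hTx
          by_cases hji : I x = I h
          · rw [hji, hsel]
            by_cases hxh : x = h
            · rw [if_pos hxh, hc']
              subst hxh
              exact hvρ₂ x hx hTx
            · rw [if_neg hxh]
              have := hvρ x hx hTx
              rwa [hji] at this
          · rw [hoff _ _ hji]
            exact hvρ x hx hTx
        have hnhp_τ : SatNHP G a0 k I ρτ := by
          intro x hx hTx hstay j hj
          by_cases hji : I x = I h
          · rw [hji, hsel] at hstay
            by_cases hxh : x = h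
            · rw [if_pos hxh, hc'] at hstay
              subst hxh
              refine hnρ₂ x hx hTx ?_ j hj
              rwa [hji]
            · rw [if_neg hxh] at hstay
              refine hnρ x hx hTx ?_ j hj
              rw [hji]
              exact hstay
          · rw [hoff _ _ hji] at hstay
            exact hnρ x hx hTx hstay j hj
        have hineq := hbrρ h hh hT τ hval_τ hnhp_τ
        have hselh : ρτ (I h) h = c' := by rw [hsel, if_pos rfl]
        have hstepτ : outcomeFrom G a0 k I ρτ h =
            outcomeFrom G a0 k I ρτ (h ++ [⟨I h, c'⟩]) := by
          have := outcomeFrom_step hn hk hI hval_τ hh hT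
          rwa [hselh] at this
        have hagree : outcomeFrom G a0 k I ρτ (h ++ [⟨I h, c'⟩]) =
            outcomeFrom G a0 k I ρ (h ++ [⟨I h, c'⟩]) := by
          apply outcomeFrom_congr
          intro x hpre j
          have hxlen : h.length + 1 ≤ x.length := by
            have := hpre.length_le
            simpa using this
          have hxh : x ≠ h := by
            intro hcon
            rw [hcon] at hxlen
            omega
          by_cases hji : j = I h
          · subst hji
            rw [hsel, if_neg hxh]
          · rw [hoff _ _ hji]
        rw [hρτ] at hstepτ hagree
        calc G.u (I h) (outcomeFrom G a0 k I ρ (h ++ [⟨I h, c'⟩]))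
            = G.u (I h) (outcomeFrom G a0 k I (Function.update ρ (I h) τ) h) := by
              rw [← hagree, ← hstepτ]
          _ ≤ G.u (I h) (outcomeFrom G a0 k I ρ h) := hineq
      have hdev1 : G.u (I h) (outcomeFrom G a0 k I σ h2) ≤
          G.u (I h) (outcomeFrom G a0 k I σ h) :=
        hdev σ σ' hval hval' hnhp hnhp' hbr
      have hdev2 : G.u (I h) (outcomeFrom G a0 k I σ' h1) ≤
          G.u (I h) (outcomeFrom G a0 k I σ' h) :=
        hdev σ' σ hval' hval hnhp' hnhp hbr'
      have heq : outcomeFrom G a0 k I σ h1 = outcomeFrom G a0 k I σ h2 := by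
        apply hG (I h)
        apply le_antisymm
        · calc G.u (I h) (outcomeFrom G a0 k I σ h1)
              = G.u (I h) (outcomeFrom G a0 k I σ' h1) := by rw [ih1]
            _ ≤ G.u (I h) (outcomeFrom G a0 k I σ' h) := hdev2
            _ = G.u (I h) (outcomeFrom G a0 k I σ' h2) := by rw [hstep2]
            _ = G.u (I h) (outcomeFrom G a0 k I σ h2) := by rw [ih2]
        · calc G.u (I h) (outcomeFrom G a0 k I σ h2)
              ≤ G.u (I h) (outcomeFrom G a0 k I σ h) := hdev1
            _ = G.u (I h) (outcomeFrom G a0 k I σ h1) := by rw [hstep1]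
      rw [hstep1, hstep2, heq, ih2]

end NoHarm
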